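/- arXiv:1708.08684 — 5 statements merged into one kernel-verified Lean document; each statement's English description precedes it below -/
import Mathlib

section
/- There exists a nonzero additive function $f: \mathbb{R} \to \mathbb{R}$ such that $f(x) \cdot f(1/x) = 0$ for every nonzero real number $x$. -/
/-!
Take a valuation subring `V ⊊ ℝ` containing `ℚ`; it exists because `ℝ` is not algebraic over `ℚ`.
Any nonzero `ℚ`-linear functional vanishing on `V` works, since every `x` satisfies
`x ∈ V` or `x⁻¹ ∈ V`.
-/

theorem ValuationSubring.exists_dual_ne_zero_mul_inv_eq_zero {k K : Type*} [Field k] [Field K]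
    [Algebra k K] (V : ValuationSubring K) (hkV : ∀ a : k, algebraMap k K a ∈ V) (hV : V ≠ ⊤) :
    ∃ f : K →ₗ[k] k, f ≠ 0 ∧ ∀ x, f x * f x⁻¹ = 0 := by
  let A : Subalgebra k K := { V.toSubring with algebraMap_mem' := hkV }
  have hA : Subalgebra.toSubmodule A < ⊤ := by
    refine lt_top_iff_ne_top.mpr fun h => hV (top_unique fun x _ => ?_)
    exact (Subalgebra.toSubmodule A).eq_top_iff'.mp h x
  obtain ⟨f, hf, hAf⟩ := (Subalgebra.toSubmodule A).exists_le_ker_of_lt_top hA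
  refine ⟨f, hf, fun x => ?_⟩
  rcases V.mem_or_inv_mem x with hx | hx
  · rw [(hAf hx : f x = 0), zero_mul]
  · rw [(hAf hx : f x⁻¹ = 0), mul_zero]

theorem ValuationSubring.exists_notMem_of_not_isIntegral {k K : Type*} [Field k] [Field K]
    [Algebra k K] {t : K} (ht : ¬ IsIntegral k t) :
    ∃ V : ValuationSubring K, (∀ a : k, algebraMap k K a ∈ V) ∧ t ∉ V := by
  obtain ⟨V, hV, htV⟩ :=
    (integralClosure k K).toSubring.exists_le_valuationSubring_of_isIntegrallyClosedIn
      (x := t) ht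
  exact ⟨V, fun a => hV ((integralClosure k K).algebraMap_mem a), htV⟩

theorem not_isIntegral_rat_liouvilleNumber : ¬ IsIntegral ℚ (liouvilleNumber 3) := fun h =>
  transcendental_liouvilleNumber (by norm_num)
    ((IsFractionRing.isAlgebraic_iff ℤ ℚ ℝ).mpr h.isAlgebraic)

theorem stmt_4 :
    ∃ f : ℝ → ℝ, (∀ x y : ℝ, f (x + y) = f x + f y) ∧ f ≠ 0 ∧
      ∀ x : ℝ, x ≠ 0 → f x * f x⁻¹ = 0 := by
  obtain ⟨V, hℚV, htV⟩ := ValuationSubring.exists_notMem_of_not_isIntegral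
    not_isIntegral_rat_liouvilleNumber
  obtain ⟨f, hf, hf_mul_inv⟩ := V.exists_dual_ne_zero_mul_inv_eq_zero hℚV
    (fun h => htV (h ▸ ValuationSubring.mem_top _))
  refine ⟨fun x => f x, fun x y => by simp, fun h => hf ?_, fun x _ => ?_⟩
  · ext x
    simpa using congrFun h x
  · simp only
    exact_mod_cast hf_mul_inv x
end

section
/- There exists a nonzero additive function $f: \mathbb{R} \to \mathbb{R}$ with $f(x) f(1/x) = 0$ for all nonzero $x$, if and only if there exists a $\mathbb{Q}$-subspace $U$ of $\mathbb{R}$ such that $U \neq \mathbb{R}$ and for every nonzero real $x$, either $x \in U$ or $1/x \in U$. -/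
/-! Additive maps ℝ → ℝ are ℚ-linear, so one may take `U` to be the kernel of `f`; conversely a
proper ℚ-subspace lies in the kernel of a nonzero ℚ-linear functional, and `f x * f x⁻¹ = 0`
holds as soon as `x` or `x⁻¹` lies in that kernel. -/

theorem Submodule.exists_linearMap_ne_zero_le_ker {K V W : Type*} [Field K] [AddCommGroup V]
    [Module K V] [AddCommGroup W] [Module K W] [Nontrivial W] (U : Submodule K V) (hU : U ≠ ⊤) :
    ∃ f : V →ₗ[K] W, f ≠ 0 ∧ U ≤ LinearMap.ker f := by
  obtain ⟨φ, hφ, hUφ⟩ := U.exists_le_ker_of_lt_top hU.lt_top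
  obtain ⟨w, hw⟩ := exists_ne (0 : W)
  refine ⟨φ.smulRight w, fun h => hφ (LinearMap.ext fun v => ?_), fun v hv => ?_⟩
  · simpa [hw] using LinearMap.congr_fun h v
  · simp [LinearMap.mem_ker.mp (hUφ hv)]

theorem stmt_5 :
    (∃ f : ℝ → ℝ, (∀ x y : ℝ, f (x + y) = f x + f y) ∧ f ≠ 0 ∧
        ∀ x : ℝ, x ≠ 0 → f x * f x⁻¹ = 0) ↔
      ∃ U : Submodule ℚ ℝ, U ≠ ⊤ ∧ ∀ x : ℝ, x ≠ 0 → x ∈ U ∨ x⁻¹ ∈ U := by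
  constructor
  · rintro ⟨f, hadd, hf, hinv⟩
    let F : ℝ →ₗ[ℚ] ℝ := (AddMonoidHom.mk' f hadd).toRatLinearMap
    refine ⟨LinearMap.ker F, fun h => hf ?_, fun x hx => mul_eq_zero.mp (hinv x hx)⟩
    exact congrArg DFunLike.coe (LinearMap.ker_eq_top.mp h)
  · rintro ⟨U, hU, hUinv⟩
    obtain ⟨F, hF, hUF⟩ := U.exists_linearMap_ne_zero_le_ker (W := ℝ) hU
    refine ⟨F, F.map_add, fun h => hF (LinearMap.coe_injective h), fun x hx => ?_⟩
    rcases hUinv x hx with h | h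
    · rw [LinearMap.mem_ker.mp (hUF h), zero_mul]
    · rw [LinearMap.mem_ker.mp (hUF h), mul_zero]
end

section
/- There exists a $\mathbb{Q}$-subalgebra $O$ of $\mathbb{R}$ such that $O \neq \mathbb{R}$ and for every nonzero real number $x$, either $x \in O$ or $1/x \in O$. (That is, $\mathbb{R}$ admits a nontrivial valuation ring containing $\mathbb{Q}$.) -/
/-!
Pick a transcendental `a`. Then `ℚ[a]` is a polynomial ring in which `a` is not a unit, so `a`
lies in a maximal ideal of `ℚ[a]`; a valuation subring of `ℝ` dominating the localisation at
that ideal (Chevalley) contains `ℚ[a]` but not `a⁻¹`.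
-/

open Polynomial

theorem Transcendental.not_isUnit_adjoin_singleton {R S : Type*} [CommRing R] [Nontrivial R]
    [CommRing S] [Algebra R S] {s : S} (hs : Transcendental R s) :
    ¬IsUnit (⟨s, Algebra.self_mem_adjoin_singleton R s⟩ : Algebra.adjoin R {s}) := fun h ↦
  not_isUnit_X (by simpa using h.map (algEquivOfTranscendental R s hs).symm)

theorem Subring.exists_le_valuationSubring_mem_nonunits {K : Type*} [Field K] {A : Subring K}
    {x : A} (hx : ¬IsUnit x) :
    ∃ V : ValuationSubring K, A ≤ V.toSubring ∧ (x : K) ∈ V.nonunits := by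
  obtain ⟨V, hAV, hV⟩ := Ideal.image_subset_nonunits_valuationSubring (Ideal.span {x})
    (by rwa [Ne, Ideal.span_singleton_eq_top])
  exact ⟨V, hAV, hV ⟨x, Ideal.mem_span_singleton_self x, rfl⟩⟩

theorem Transcendental.exists_subalgebra_ne_top_mem_or_inv_mem {F K : Type*} [CommRing F]
    [Nontrivial F] [Field K] [Algebra F K] {a : K} (ha : Transcendental F a) :
    ∃ O : Subalgebra F K, O ≠ ⊤ ∧ ∀ x : K, x ≠ 0 → x ∈ O ∨ x⁻¹ ∈ O := by
  obtain ⟨V, hFaV, haV⟩ := Subring.exists_le_valuationSubring_mem_nonunits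
    (A := (Algebra.adjoin F {a}).toSubring) ha.not_isUnit_adjoin_singleton
  have ha0 : a ≠ 0 := fun h ↦ ha (h ▸ isAlgebraic_zero)
  have ha_inv : a⁻¹ ∉ V := (V.mem_nonunits_iff_or.mp haV).resolve_left ha0
  let O : Subalgebra F K :=
    { V.toSubring with algebraMap_mem' := fun r ↦ hFaV ((Algebra.adjoin F {a}).algebraMap_mem r) }
  exact ⟨O, fun h ↦ ha_inv (h ▸ Algebra.mem_top : a⁻¹ ∈ O), fun x _ ↦ V.mem_or_inv_mem x⟩

theorem stmt_6 :
    ∃ O : Subalgebra ℚ ℝ, O ≠ ⊤ ∧ ∀ x : ℝ, x ≠ 0 → x ∈ O ∨ x⁻¹ ∈ O :=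
  have := IsLocalization.isAlgebraic ℚ (nonZeroDivisors ℤ)
  ((transcendental_liouvilleNumber le_rfl).extendScalars ℚ).exists_subalgebra_ne_top_mem_or_inv_mem
end

section
/- Let $K$ be a field, $R \subseteq K$ a subring, and $P$ a prime ideal of $R$. Then there exists a valuation ring $O$ of $K$ with maximal ideal $M$ such that $R \subseteq O$ and $M \cap R = P$. -/
/-!
Localize `R` at `P` to get a local subring `R_P` of `K` whose maximal ideal lies over `P`.
By Zorn's lemma `R_P` is dominated by a valuation ring `O` of `K`, i.e. `R_P ⊆ O` is a local
homomorphism, so the maximal ideal of `O` also lies over `P`.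
-/

open IsLocalRing

namespace LocalSubring

variable {K : Type*} [Field K]

lemma comap_maximalIdeal_ofPrime (R : Subring K) (P : Ideal R) [P.IsPrime] :
    (maximalIdeal (ofPrime R P).toSubring).comap (Subring.inclusion (le_ofPrime R P)) = P :=
  IsLocalization.AtPrime.under_maximalIdeal _ P

lemma comap_maximalIdeal_of_le {A B : LocalSubring K} (h : A ≤ B) :
    (maximalIdeal B.toSubring).comap (Subring.inclusion h.1) = maximalIdeal A.toSubring :=
  haveI := h.2
  maximalIdeal_comap _

end LocalSubring

lemma ValuationSubring.exists_comap_maximalIdeal_eq {K : Type*} [Field K] (R : Subring K)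
    (P : Ideal R) [P.IsPrime] :
    ∃ (O : ValuationSubring K) (h : R ≤ O.toLocalSubring.toSubring),
      (maximalIdeal O.toLocalSubring.toSubring).comap (Subring.inclusion h) = P := by
  obtain ⟨O, hRPO⟩ := (LocalSubring.ofPrime R P).exists_le_valuationSubring
  refine ⟨O, (LocalSubring.le_ofPrime R P).trans hRPO.1, ?_⟩
  calc _ = ((maximalIdeal O.toLocalSubring.toSubring).comap (Subring.inclusion hRPO.1)).comap
        (Subring.inclusion (LocalSubring.le_ofPrime R P)) := rfl
    _ = P := by
      rw [LocalSubring.comap_maximalIdeal_of_le hRPO, LocalSubring.comap_maximalIdeal_ofPrime]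

theorem stmt_7 {K : Type*} [Field K] (R : Subring K) (P : Ideal R) (hP : P.IsPrime) :
    ∃ O : Subring K, ∃ hRO : R ≤ O,
      (∀ x : K, x ≠ 0 → x ∈ O ∨ x⁻¹ ∈ O) ∧
      ∃ M : Ideal O, M.IsMaximal ∧ (∀ M' : Ideal O, M'.IsMaximal → M' = M) ∧
        Ideal.comap (Subring.inclusion hRO) M = P := by
  obtain ⟨O, hRO, hOP⟩ := ValuationSubring.exists_comap_maximalIdeal_eq R P
  exact ⟨O.toLocalSubring.toSubring, hRO, fun x _ ↦ O.mem_or_inv_mem x, maximalIdeal _,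
    inferInstance, fun _ hM' ↦ eq_maximalIdeal hM', hOP⟩
end

section
/- Let $K$ be a field with a valuation ring $O_K$, and let $L$ be a field extension of $K$. Then there exists a valuation ring $O_L$ of $L$ such that $O_L \cap K = O_K$. -/
/-! Chevalley's extension theorem (`IsLocalRing.exists_factor_valuationRing`) yields a valuation
ring of `L` dominating `O_K`, i.e. receiving `O_K` by a local homomorphism; a valuation ring is
maximal for domination, so the contraction of that ring to `K` is `O_K` itself. -/

lemma ValuationSubring.comap_eq_of_isLocalHom {K L : Type*} [Field K] [Field L]
    (A : ValuationSubring K) (B : Subring L) (f : K →+* L) (hAB : ∀ a : A, f a ∈ B)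
    [IsLocalHom ((f.comp A.subtype).codRestrict B hAB)] :
    B.comap f = A.toSubring := by
  refine le_antisymm (fun x hx => ?_) (fun a ha => hAB ⟨a, ha⟩)
  by_contra hxA
  have hx0 : x ≠ 0 := by rintro rfl; exact hxA A.zero_mem
  have hxinv : x⁻¹ ∈ A := (A.mem_or_inv_mem x).resolve_left hxA
  -- `f x⁻¹` is a unit of `B` with inverse `f x`, so locality makes `x⁻¹` a unit of `A`.
  have hunit : IsUnit ((f.comp A.subtype).codRestrict B hAB ⟨x⁻¹, hxinv⟩) :=
    isUnit_iff_exists_inv.mpr ⟨⟨f x, hx⟩, Subtype.ext <| by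
      change f x⁻¹ * f x = 1
      rw [← map_mul, inv_mul_cancel₀ hx0, map_one]⟩
  obtain ⟨u, hu⟩ := (IsUnit.of_map _ _ hunit).exists_right_inv
  have hxu : x = u := (inv_mul_eq_one₀ hx0).mp (congrArg Subtype.val hu)
  exact hxA (hxu ▸ u.2)

theorem stmt_8 {K L : Type*} [Field K] [Field L] [Algebra K L]
    (OK : Subring K) (hOK : ∀ x : K, x ≠ 0 → x ∈ OK ∨ x⁻¹ ∈ OK) :
    ∃ OL : Subring L, (∀ y : L, y ≠ 0 → y ∈ OL ∨ y⁻¹ ∈ OL) ∧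
      ∀ x : K, algebraMap K L x ∈ OL ↔ x ∈ OK := by
  let V := ValuationSubring.ofSubring OK fun x =>
    (eq_or_ne x 0).elim (fun hx => .inl (hx ▸ OK.zero_mem)) (hOK x)
  obtain ⟨OL, hV, hloc⟩ :=
    IsLocalRing.exists_factor_valuationRing ((algebraMap K L).comp V.subtype)
  have hcomap := V.comap_eq_of_isLocalHom OL.toSubring (algebraMap K L) hV
  exact ⟨OL.toSubring, fun y _ => OL.mem_or_inv_mem y,
    fun x => SetLike.ext_iff.mp hcomap x⟩
end
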